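/- arXiv:1308.2122 — 5 statements merged into one kernel-verified Lean document; each statement's English description precedes it below -/
import Mathlib

section
/- Let 𝔾 be the germ semiring. For any x, y ∈ 𝔾, one has x ≤𝔾 y if, and only if, there exists ε₀ > 0 such that x(ε) ≤ y(ε) (in the order of ℝmax ∪ {+∞}) for all ε with 0 < ε < ε₀. -/
/-! Near `ε = 0⁺` a germ `a̲` behaves as `a - ε`. Eventually `a ≤ b - ε` holds iff `a < b`, whereas
eventually `a - ε ≤ b` holds iff `a ≤ b`: this is the asymmetry built into `≤𝔾` between `ℝmax ∪ {+∞}`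
and `ℝ⁻`. In all other comparisons `ε` cancels or plays no role. -/

attribute [local instance] Classical.propDecidable

/-- The germ semiring `𝔾 = ℝmax ∪ {+∞} ∪ ℝ⁻`: `negInf` is `-∞`, `fin a` is the
real number `a` (an element of `ℝmax`), `germ a` is the germ `a̲ ∈ ℝ⁻`, and
`posInf` is `+∞`. -/
inductive TGerm where
  | negInf : TGerm
  | fin : ℝ → TGerm
  | germ : ℝ → TGerm
  | posInf : TGerm

namespace TGerm

/-- The modulus `|x| ∈ ℝmax ∪ {+∞} = EReal` of an element of `𝔾`. -/
noncomputable def modulus : TGerm → EReal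
  | negInf => ⊥
  | fin a => (a : EReal)
  | germ a => (a : EReal)
  | posInf => ⊤

/-- Whether `x` belongs to the copy `ℝ⁻` of perturbed reals. -/
def isPert : TGerm → Bool
  | germ _ => true
  | _ => false

/-- The total order `≤𝔾` on `𝔾`: `x ≤𝔾 y` iff `|x| < |y|` when
`x ∈ ℝmax ∪ {+∞}` and `y ∈ ℝ⁻`, and `|x| ≤ |y|` otherwise. -/
def gle (x y : TGerm) : Prop :=
  if isPert x = false ∧ isPert y = true then modulus x < modulus y
  else modulus x ≤ modulus y

/-- The valuation `x(ε) ∈ ℝmax ∪ {+∞} = EReal` of `x ∈ 𝔾` at `ε`. -/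
noncomputable def val : TGerm → ℝ → EReal
  | negInf, _ => ⊥
  | fin a, _ => (a : EReal)
  | germ a, ε => ((a - ε : ℝ) : EReal)
  | posInf, _ => ⊤

/-- The addition `⊕` of `𝔾`: the maximum with respect to `≤𝔾`. -/
noncomputable def add (x y : TGerm) : TGerm := if gle x y then y else x

/-- The minimum with respect to `≤𝔾`. -/
noncomputable def gmin (x y : TGerm) : TGerm := if gle x y then x else y

/-- The tropical sum `⊕ᵢ f i` of a finite family in `𝔾`. -/
noncomputable def gsum {n : ℕ} (f : Fin n → TGerm) : TGerm :=
  (List.ofFn f).foldr add negInf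

/-- The minimum (w.r.t. `≤𝔾`) of a finite family in `𝔾`. -/
noncomputable def ginf {n : ℕ} (f : Fin n → TGerm) : TGerm :=
  (List.ofFn f).foldr gmin posInf

/-- The multiplication `⊗` of `𝔾`. -/
def mul : TGerm → TGerm → TGerm
  | negInf, _ => negInf
  | _, negInf => negInf
  | posInf, _ => posInf
  | _, posInf => posInf
  | fin a, fin b => fin (a + b)
  | fin a, germ b => germ (a + b)
  | germ a, fin b => germ (a + b)
  | germ a, germ b => germ (a + b)

end TGerm

/-- The embedding of `ℝmax = ℝ ∪ {-∞}` into the germ semiring `𝔾`. -/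
def toGerm (x : WithBot ℝ) : TGerm := WithBot.recBotCoe TGerm.negInf TGerm.fin x

/-- The embedding of `ℝmax = ℝ ∪ {-∞}` into `ℝmax ∪ {+∞} = EReal`. -/
noncomputable def rmaxToEReal (x : WithBot ℝ) : EReal :=
  WithBot.recBotCoe ⊥ (fun a : ℝ => (a : EReal)) x

open Filter Topology

section Eventually

variable {𝕜 : Type*} [Field 𝕜] [LinearOrder 𝕜] [IsStrictOrderedRing 𝕜] [TopologicalSpace 𝕜]
  [OrderTopology 𝕜] {a b : 𝕜}

theorem eventually_nhdsGT_zero_le_sub_iff : (∀ᶠ ε in 𝓝[>] 0, a ≤ b - ε) ↔ a < b := by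
  constructor
  · intro h
    obtain ⟨ε, hab, hε⟩ := (h.and self_mem_nhdsWithin).exists
    linarith [show (0 : 𝕜) < ε from hε]
  · intro hab
    filter_upwards [nhdsWithin_le_nhds (eventually_lt_nhds (sub_pos.mpr hab))] with ε hε
    linarith

theorem eventually_nhdsGT_zero_le_add_iff : (∀ᶠ ε in 𝓝[>] 0, a ≤ b + ε) ↔ a ≤ b := by
  constructor
  · have hlim : Tendsto (fun ε => b + ε) (𝓝[>] 0) (𝓝 b) := by
      simpa using (tendsto_const_nhds.add tendsto_id).mono_left (nhdsWithin_le_nhds (a := (0 : 𝕜)))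
    exact ge_of_tendsto hlim
  · intro hab
    filter_upwards [self_mem_nhdsWithin] with ε (hε : (0 : 𝕜) < ε)
    linarith

end Eventually

namespace TGerm

theorem gle_iff_eventually_val_le (x y : TGerm) :
    x.gle y ↔ ∀ᶠ ε in 𝓝[>] (0 : ℝ), x.val ε ≤ y.val ε := by
  cases x <;> cases y <;>
    simp [gle, isPert, modulus, val, -EReal.coe_sub, eventually_nhdsGT_zero_le_sub_iff,
      eventually_nhdsGT_zero_le_add_iff, (nhdsGT_neBot (0 : ℝ)).ne]

end TGerm

theorem statement_0 (x y : TGerm) :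
    x.gle y ↔ ∃ ε₀ : ℝ, 0 < ε₀ ∧ ∀ ε : ℝ, 0 < ε → ε < ε₀ → x.val ε ≤ y.val ε := by
  simp only [TGerm.gle_iff_eventually_val_le, (nhdsGT_basis (0 : ℝ)).eventually_iff,
    Set.mem_Ioo, and_imp]
end

section
/- Let a₀, a₁, …, aₙ ∈ ℝmax and b₀, b₁, …, bₙ ∈ 𝔾. A vector x ∈ ℝmaxⁿ satisfies the mixed tropical affine inequality a₀ ⊕ a₁x₁ ⊕ ⋯ ⊕ aₙxₙ ≤𝔾 b₀ ⊕ b₁x₁ ⊕ ⋯ ⊕ bₙxₙ if, and only if, there exists ε > 0 such that max(a₀, a₁ + x₁, …, aₙ + xₙ) ≤ max(b₀(ε), b₁(ε) + x₁, …, bₙ(ε) + xₙ) holds in ℝmax ∪ {+∞}. -/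
attribute [local instance] Classical.propDecidable

/-!
Ordering `𝔾` lexicographically by the modulus and then by "not a germ" turns `≤𝔾` into a
linear order in which `⊕` is `max` and `-∞` is the bottom. For `y ∈ ℝmax ∪ {+∞}`, one has
`y ≤𝔾 t` iff `|y| ≤ t(ε)` for some `ε > 0`: a germ `β̲` dominates exactly the values below `β`,
and those are the values `≤ β - ε` for small `ε`. Being below a finite `⊕` means being below
one of its terms, and the existentials over the term and over `ε` commute.
-/

namespace TGerm

noncomputable def key (x : TGerm) : EReal ×ₗ Bool := toLex (x.modulus, !x.isPert)

lemma key_injective : Function.Injective key := by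
  intro x y h
  cases x <;> cases y <;> simp_all [key, modulus, isPert]

noncomputable instance : LinearOrder TGerm := LinearOrder.lift' key key_injective

lemma le_iff_key_le {x y : TGerm} : x ≤ y ↔ key x ≤ key y := Iff.rfl

lemma gle_iff_le {x y : TGerm} : x.gle y ↔ x ≤ y := by
  rw [le_iff_key_le, key, key, Prod.Lex.toLex_le_toLex, gle]
  cases x.isPert <;> cases y.isPert <;> simp [le_iff_lt_or_eq]

lemma modulus_mono : Monotone modulus := fun _ _ h =>
  (Prod.Lex.toLex_le_toLex'.mp (le_iff_key_le.mp h)).1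

instance : OrderBot TGerm where
  bot := negInf
  bot_le y := by
    rw [← gle_iff_le]
    cases y <;> simp [gle, modulus, isPert, EReal.bot_lt_coe]

lemma bot_lt_modulus {x : TGerm} (hx : ⊥ < x) : ⊥ < x.modulus := by
  cases x with
  | negInf => exact absurd hx (lt_irrefl _)
  | fin a | germ a => exact EReal.bot_lt_coe a
  | posInf => exact bot_lt_top

lemma add_eq_max (x y : TGerm) : add x y = max x y := by
  rw [add, max_def]
  by_cases h : x ≤ y
  · rw [if_pos (gle_iff_le.mpr h), if_pos h]
  · rw [if_neg (mt gle_iff_le.mp h), if_neg h]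

lemma gsum_eq_sup {n : ℕ} (f : Fin n → TGerm) : gsum f = Finset.univ.sup f := by
  rw [Finset.sup_def, Fin.univ_val_map, Multiset.sup_coe, gsum, funext₂ add_eq_max]
  rfl

lemma modulus_sup {ι : Type*} (s : Finset ι) (f : ι → TGerm) :
    (s.sup f).modulus = s.sup (modulus ∘ f) :=
  Finset.apply_sup_eq_sup_comp_of_linearOrder _ modulus_mono rfl

lemma isPert_max {x y : TGerm} (hx : x.isPert = false) (hy : y.isPert = false) :
    (max x y).isPert = false := by
  rcases max_choice x y with h | h <;> rwa [h]

lemma isPert_sup {ι : Type*} {s : Finset ι} {f : ι → TGerm}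
    (hf : ∀ i ∈ s, (f i).isPert = false) : (s.sup f).isPert = false :=
  Finset.sup_induction (p := fun t : TGerm => t.isPert = false) rfl
    (fun _ ha _ hb => isPert_max ha hb) hf

theorem le_iff_exists_modulus_le_val {y t : TGerm} (hy : y.isPert = false) :
    y ≤ t ↔ ∃ ε, 0 < ε ∧ y.modulus ≤ t.val ε := by
  rw [← gle_iff_le, gle, hy]
  cases t with
  | germ β =>
    simp only [isPert, and_self, ↓reduceIte, modulus, val]
    constructor
    · intro h
      obtain ⟨r, hyr, hrβ⟩ := EReal.exists_between_coe_real h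
      refine ⟨β - r, by linarith [EReal.coe_lt_coe_iff.mp hrβ], ?_⟩
      rw [sub_sub_cancel]
      exact hyr.le
    · rintro ⟨ε, hε, h⟩
      exact h.trans_lt (EReal.coe_lt_coe_iff.mpr (by linarith))
  | negInf | fin _ | posInf =>
    simp only [isPert, Bool.false_eq_true, and_false, ↓reduceIte]
    exact ⟨fun h => ⟨1, one_pos, h⟩, fun ⟨_, _, h⟩ => h⟩

theorem le_sup_iff_exists_modulus_le_sup_val {ι : Type*} {s : Finset ι} {f : ι → TGerm}
    {y : TGerm} (hy : y.isPert = false) :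
    y ≤ s.sup f ↔ ∃ ε, 0 < ε ∧ y.modulus ≤ s.sup fun i => (f i).val ε := by
  rcases eq_bot_or_bot_lt y with rfl | hy0
  · exact iff_of_true bot_le ⟨1, one_pos, bot_le⟩
  simp only [Finset.le_sup_iff hy0, Finset.le_sup_iff (bot_lt_modulus hy0),
    le_iff_exists_modulus_le_val hy]
  constructor
  · rintro ⟨i, hi, ε, hε, h⟩
    exact ⟨ε, hε, i, hi, h⟩
  · rintro ⟨ε, hε, i, hi, h⟩
    exact ⟨i, hi, ε, hε, h⟩

end TGerm

open TGerm

lemma isPert_toGerm (y : WithBot ℝ) : (toGerm y).isPert = false := by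
  cases y using WithBot.recBotCoe <;> rfl

lemma modulus_toGerm (y : WithBot ℝ) : (toGerm y).modulus = rmaxToEReal y := by
  cases y using WithBot.recBotCoe <;> rfl

lemma isPert_toGerm_mul_toGerm (u y : WithBot ℝ) : ((toGerm u).mul (toGerm y)).isPert = false := by
  cases u using WithBot.recBotCoe <;> cases y using WithBot.recBotCoe <;> rfl

lemma modulus_toGerm_mul_toGerm (u y : WithBot ℝ) :
    ((toGerm u).mul (toGerm y)).modulus = rmaxToEReal u + rmaxToEReal y := by
  cases u using WithBot.recBotCoe <;> cases y using WithBot.recBotCoe <;>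
    simp [toGerm, rmaxToEReal, mul, modulus]

lemma val_mul_toGerm (t : TGerm) (y : WithBot ℝ) (ε : ℝ) :
    (t.mul (toGerm y)).val ε = t.val ε + rmaxToEReal y := by
  cases t <;> cases y using WithBot.recBotCoe <;> simp [toGerm, rmaxToEReal, mul, val]
  rename_i a c
  exact_mod_cast (by ring : a + c - ε = a - ε + c)

theorem statement_4 (n : ℕ) (a₀ : WithBot ℝ) (a : Fin n → WithBot ℝ)
    (b₀ : TGerm) (b : Fin n → TGerm) (x : Fin n → WithBot ℝ) :
    (TGerm.add (toGerm a₀) (TGerm.gsum fun i => (toGerm (a i)).mul (toGerm (x i)))).gle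
      (TGerm.add b₀ (TGerm.gsum fun i => (b i).mul (toGerm (x i))))
    ↔ ∃ ε : ℝ, 0 < ε ∧
        max (rmaxToEReal a₀) (Finset.univ.sup fun i => rmaxToEReal (a i) + rmaxToEReal (x i))
          ≤ max (b₀.val ε) (Finset.univ.sup fun i => (b i).val ε + rmaxToEReal (x i)) := by
  simp only [gle_iff_le, add_eq_max, gsum_eq_sup]
  set y := max (toGerm a₀) (Finset.univ.sup fun i => (toGerm (a i)).mul (toGerm (x i)))
  have hy : y.isPert = false :=
    isPert_max (isPert_toGerm a₀) (isPert_sup fun i _ => isPert_toGerm_mul_toGerm _ _)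
  have hmod : y.modulus = max (rmaxToEReal a₀)
      (Finset.univ.sup fun i => rmaxToEReal (a i) + rmaxToEReal (x i)) := by
    rw [modulus_mono.map_max, modulus_sup, modulus_toGerm]
    simp only [Function.comp_def, modulus_toGerm_mul_toGerm]
  rw [le_max_iff, le_iff_exists_modulus_le_val hy, le_sup_iff_exists_modulus_le_sup_val hy, hmod]
  simp only [val_mul_toGerm, le_max_iff, ← exists_or, and_or_left]
end

section
/- Let a, b ∈ ℝmax and c, d ∈ 𝔾. The set of solutions x ∈ ℝmax of the mixed tropical affine inequality a ⊗ x ⊕ b ≤𝔾 c ⊗ x ⊕ d equals {x ∈ ℝmax : b ≤𝔾 c ⊗ x ⊕ d} if a ≤𝔾 c, and equals {x ∈ ℝmax : a ⊗ x ⊕ b ≤𝔾 d} otherwise. -/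
attribute [local instance] Classical.propDecidable

namespace TGerm

lemma gle_refl (x : TGerm) : gle x x := by
  cases x <;> simp [gle, isPert, modulus]

lemma gle_trans {x y z : TGerm} (h1 : gle x y) (h2 : gle y z) : gle x z := by
  cases x <;> cases y <;> cases z <;>
    simp_all [gle, isPert, modulus] <;>
    first
      | exact le_trans h1 h2
      | exact lt_of_le_of_lt h1 h2
      | exact lt_of_lt_of_le h1 h2
      | exact le_of_lt (lt_of_lt_of_le h1 h2)
      | exact le_of_lt (lt_trans h1 h2)
      | exact le_of_lt (lt_of_le_of_lt h1 h2)

lemma gle_total (x y : TGerm) : gle x y ∨ gle y x := by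
  cases x <;> cases y <;> simp [gle, isPert, modulus] <;>
    first
      | exact le_total _ _
      | exact lt_or_ge _ _
      | exact le_or_gt _ _

lemma negInf_gle (y : TGerm) : gle negInf y := by
  cases y <;> simp [gle, isPert, modulus] <;> exact bot_lt_iff_ne_bot.2 (by simp)

lemma add_eq_or (x y : TGerm) : add x y = x ∨ add x y = y := by
  unfold add; split_ifs <;> simp

lemma le_add_left (x y : TGerm) : gle x (add x y) := by
  unfold add; split_ifs with h
  · exact h
  · exact gle_refl x

lemma le_add_right (x y : TGerm) : gle y (add x y) := by
  unfold add; split_ifs with h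
  · exact gle_refl y
  · rcases gle_total x y with h' | h'
    · exact absurd h' h
    · exact h'

lemma add_le {x y z : TGerm} (h1 : gle x z) (h2 : gle y z) : gle (add x y) z := by
  unfold add; split_ifs <;> assumption

lemma mul_negInf_right (u : TGerm) : mul u negInf = negInf := by
  cases u <;> rfl

lemma mul_fin_le_iff (u v : TGerm) (r : ℝ) :
    gle (mul u (fin r)) (mul v (fin r)) ↔ gle u v := by
  cases u <;> cases v <;>
    simp [mul, gle, isPert, modulus, ← EReal.coe_add] <;>
    constructor <;> intro h <;> linarith

end TGerm

lemma toGerm_bot : toGerm ⊥ = TGerm.negInf := rfl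
lemma toGerm_coe (r : ℝ) : toGerm (r : WithBot ℝ) = TGerm.fin r := rfl

theorem statement_6 (a b : WithBot ℝ) (c d : TGerm) :
    ((toGerm a).gle c →
      {x : WithBot ℝ |
          (((toGerm a).mul (toGerm x)).add (toGerm b)).gle ((c.mul (toGerm x)).add d)}
        = {x : WithBot ℝ | (toGerm b).gle ((c.mul (toGerm x)).add d)}) ∧
    (¬ (toGerm a).gle c →
      {x : WithBot ℝ |
          (((toGerm a).mul (toGerm x)).add (toGerm b)).gle ((c.mul (toGerm x)).add d)}
        = {x : WithBot ℝ | (((toGerm a).mul (toGerm x)).add (toGerm b)).gle d}) := by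
  constructor
  · intro hac
    ext x
    simp only [Set.mem_setOf_eq]
    constructor
    · intro h
      exact TGerm.gle_trans (TGerm.le_add_right _ _) h
    · intro h
      refine TGerm.add_le ?_ h
      have hmul : ((toGerm a).mul (toGerm x)).gle (c.mul (toGerm x)) := by
        induction x using WithBot.recBotCoe with
        | bot => rw [toGerm_bot, TGerm.mul_negInf_right, TGerm.mul_negInf_right]
                 exact TGerm.gle_refl _
        | coe r => rw [toGerm_coe]; exact (TGerm.mul_fin_le_iff _ _ _).2 hac
      exact TGerm.gle_trans hmul (TGerm.le_add_left _ _)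
  · intro hac
    ext x
    simp only [Set.mem_setOf_eq]
    constructor
    · intro h
      rcases TGerm.add_eq_or (c.mul (toGerm x)) d with he | he
      · rw [he] at h
        induction x using WithBot.recBotCoe with
        | bot =>
            simp only [toGerm_bot, TGerm.mul_negInf_right] at h ⊢
            exact TGerm.gle_trans h (TGerm.negInf_gle d)
        | coe r =>
            exfalso
            apply hac
            rw [toGerm_coe] at h
            exact (TGerm.mul_fin_le_iff _ _ _).1
              (TGerm.gle_trans (TGerm.le_add_left _ _) h)
      · rwa [he] at h
    · intro h
      exact TGerm.gle_trans h (TGerm.le_add_right _ _)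
end

section
/- Define, for integers p ≥ n ≥ 1, U(p, n) = C(p - ⌊n/2⌋, ⌊n/2⌋) + C(p - ⌊n/2⌋ - 1, ⌊n/2⌋ - 1) if n is even, and U(p, n) = 2·C(p - ⌊n/2⌋ - 1, ⌊n/2⌋) if n is odd, where C(a, b) denotes the binomial coefficient. Then for all integers p ≥ 6 and n ≥ 12, U(p + n + 1, n) ≤ p^{⌊n/2⌋}. -/
/-- `U(p, n)`, the number of facets of a cyclic polytope with `p` vertices in
dimension `n`: `C(p - ⌊n/2⌋, ⌊n/2⌋) + C(p - ⌊n/2⌋ - 1, ⌊n/2⌋ - 1)` if `n` is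
even, and `2 · C(p - ⌊n/2⌋ - 1, ⌊n/2⌋)` if `n` is odd. -/
def Ufacets (p n : ℕ) : ℕ :=
  if n % 2 = 0 then
    Nat.choose (p - n / 2) (n / 2) + Nat.choose (p - n / 2 - 1) (n / 2 - 1)
  else
    2 * Nat.choose (p - n / 2 - 1) (n / 2)

lemma key_base (p : ℕ) (hp : 6 ≤ p) : 2 * Nat.choose (p + 7) 6 ≤ p ^ 6 := by
  obtain ⟨q, rfl⟩ := Nat.exists_eq_add_of_le hp
  have hd : Nat.descFactorial (6 + q + 7) 6 =
      (q + 8) * (q + 9) * (q + 10) * (q + 11) * (q + 12) * (q + 13) := by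
    simp [Nat.descFactorial]
    ring
  have h720 : Nat.descFactorial (6 + q + 7) 6 = 720 * Nat.choose (6 + q + 7) 6 := by
    rw [Nat.descFactorial_eq_factorial_mul_choose]
    norm_num [Nat.factorial]
  have h : 720 * (2 * Nat.choose (6 + q + 7) 6) ≤ 720 * (6 + q) ^ 6 := by
    have : 720 * (2 * Nat.choose (6 + q + 7) 6) =
        2 * ((q + 8) * (q + 9) * (q + 10) * (q + 11) * (q + 12) * (q + 13)) := by
      rw [← hd, h720]; ring
    rw [this]
    nlinarith [sq_nonneg q, q.zero_le]
  exact Nat.le_of_mul_le_mul_left h (by norm_num)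

lemma key (p m : ℕ) (hp : 6 ≤ p) (hm : 6 ≤ m) :
    2 * Nat.choose (p + m + 1) m ≤ p ^ m := by
  induction m, hm using Nat.le_induction with
  | base => exact key_base p hp
  | succ m hm ih =>
    have hmul : (p + m + 2) * Nat.choose (p + m + 1) m
        = Nat.choose (p + m + 2) (m + 1) * (m + 1) := by
      have := Nat.add_one_mul_choose_eq (p + m + 1) m
      simpa [Nat.succ_eq_add_one] using this
    have h1 : (m + 1) * (2 * Nat.choose (p + m + 2) (m + 1))
        ≤ (m + 1) * p ^ (m + 1) := by
      calc (m + 1) * (2 * Nat.choose (p + m + 2) (m + 1))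
          = 2 * ((p + m + 2) * Nat.choose (p + m + 1) m) := by rw [hmul]; ring
        _ = (p + m + 2) * (2 * Nat.choose (p + m + 1) m) := by ring
        _ ≤ (p * (m + 1)) * p ^ m := by
            apply Nat.mul_le_mul _ ih
            nlinarith
        _ = (m + 1) * p ^ (m + 1) := by ring
    rw [show p + (m + 1) + 1 = p + m + 2 from by omega]
    exact Nat.le_of_mul_le_mul_left h1 (Nat.succ_pos m)

theorem statement_18 (p n : ℕ) (hp : 6 ≤ p) (hn : 12 ≤ n) :
    Ufacets (p + n + 1) n ≤ p ^ (n / 2) := by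
  set m := n / 2 with hm
  have hm6 : 6 ≤ m := by omega
  rcases Nat.even_or_odd n with he | ho
  · obtain ⟨k, hk⟩ := he
    have hkm : m = k := by omega
    have hmod : n % 2 = 0 := by omega
    have h1 : p + n + 1 - n / 2 = p + m + 1 := by omega
    have h2 : p + n + 1 - n / 2 - 1 = p + m := by omega
    rw [Ufacets, if_pos hmod, ← hm, h2, h1]
    have hle : Nat.choose (p + m) (m - 1) ≤ Nat.choose (p + m + 1) m := by
      have hpm : p + m + 1 = (p + m) + 1 := rfl
      have hmm : m = (m - 1) + 1 := by omega
      calc Nat.choose (p + m) (m - 1)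
          ≤ Nat.choose (p + m) (m - 1) + Nat.choose (p + m) ((m-1)+1) := Nat.le_add_right _ _
        _ = Nat.choose (p + m + 1) ((m-1)+1) := (Nat.choose_succ_succ' (p+m) (m-1)).symm
        _ = Nat.choose (p + m + 1) m := by rw [← hmm]
    calc Nat.choose (p + m + 1) m + Nat.choose (p + m) (m - 1)
        ≤ 2 * Nat.choose (p + m + 1) m := by omega
      _ ≤ p ^ m := key p m hp hm6
  · have hmod : ¬ n % 2 = 0 := by
      obtain ⟨k, hk⟩ := ho; omega
    have h1 : p + n + 1 - n / 2 - 1 = p + m + 1 := by omega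
    rw [Ufacets, if_neg hmod, ← hm, h1]
    exact key p m hp hm6
end

section
/- Let p and m be positive integers such that e·(p + m + 1) ≤ p·m, where e is Euler's number. Then (1 + (p+1)/m)^m · (1 + m/(p+1))^{p+1} ≤ p^m. -/
theorem statement_19 (p m : ℕ) (hp : 0 < p) (hm : 0 < m)
    (h : Real.exp 1 * ((p : ℝ) + m + 1) ≤ (p : ℝ) * m) :
    (1 + ((p : ℝ) + 1) / m) ^ m * (1 + (m : ℝ) / ((p : ℝ) + 1)) ^ (p + 1)
      ≤ (p : ℝ) ^ m := by
  have hm' : (0:ℝ) < m := by exact_mod_cast hm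
  have ha : (0:ℝ) < (p:ℝ) + 1 := by positivity
  have h1 : (1 + (m : ℝ) / ((p : ℝ) + 1)) ^ (p + 1) ≤ Real.exp 1 ^ m := by
    have hx : (1 + (m:ℝ)/((p:ℝ)+1)) ≤ Real.exp ((m:ℝ)/((p:ℝ)+1)) := by
      have := Real.add_one_le_exp ((m:ℝ)/((p:ℝ)+1)); linarith
    calc (1 + (m:ℝ)/((p:ℝ)+1)) ^ (p+1)
        ≤ (Real.exp ((m:ℝ)/((p:ℝ)+1))) ^ (p+1) :=
          pow_le_pow_left₀ (by positivity) hx _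
      _ = Real.exp ((m:ℝ)/((p:ℝ)+1) * (p+1)) := by
          rw [← Real.exp_nat_mul]; push_cast; ring_nf
      _ = Real.exp m := by
          rw [div_mul_eq_mul_div, mul_div_assoc, div_self ha.ne', mul_one]
      _ = Real.exp 1 ^ m := by rw [← Real.exp_nat_mul, mul_one]
  have key : (1 + ((p : ℝ) + 1) / m) * Real.exp 1 ≤ p := by
    rw [← sub_nonneg]
    have : (p:ℝ) - (1 + ((p:ℝ)+1)/m) * Real.exp 1
        = ((p:ℝ)*m - Real.exp 1 * ((p:ℝ) + m + 1)) / m := by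
      field_simp; ring
    rw [this]
    exact div_nonneg (by linarith) hm'.le
  have hnn : (0:ℝ) ≤ 1 + ((p:ℝ)+1)/m := by positivity
  calc (1 + ((p : ℝ) + 1) / m) ^ m * (1 + (m : ℝ) / ((p : ℝ) + 1)) ^ (p + 1)
      ≤ (1 + ((p : ℝ) + 1) / m) ^ m * Real.exp 1 ^ m := by
        apply mul_le_mul_of_nonneg_left h1 (by positivity)
    _ = ((1 + ((p : ℝ) + 1) / m) * Real.exp 1) ^ m := by rw [mul_pow]
    _ ≤ (p:ℝ) ^ m := pow_le_pow_left₀ (by positivity) key _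
end
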